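/- arXiv:1812.00456 — 5 statements merged into one kernel-verified Lean document; each statement's English description precedes it below -/
import Mathlib

section
/- Let m ≥ 1, τ ≥ 0, Qmax ≥ 0, and let x : Fin m → ℝ satisfy max_i x_i − min_i x_i ≤ 2·Qmax. Then max_i x_i − g_x(τ) ≤ (m − 1) · max{ 1/(τ + 2), 2·Qmax/(1 + exp(τ)) }. -/
/-- The softmax-weighted value `g_x(τ) = (∑ i, exp(τ·x_i)·x_i) / (∑ i, exp(τ·x_i))`. -/
noncomputable def gval {m : ℕ} (x : Fin m → ℝ) (τ : ℝ) : ℝ :=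
  (∑ i, Real.exp (τ * x i) * x i) / (∑ i, Real.exp (τ * x i))

/-- The maximum coordinate of `x : Fin m → ℝ`, for `m ≥ 1`. -/
noncomputable def maxVal {m : ℕ} (hm : 1 ≤ m) (x : Fin m → ℝ) : ℝ :=
  Finset.univ.sup' ⟨⟨0, hm⟩, Finset.mem_univ _⟩ x

/-- The minimum coordinate of `x : Fin m → ℝ`, for `m ≥ 1`. -/
noncomputable def minVal {m : ℕ} (hm : 1 ≤ m) (x : Fin m → ℝ) : ℝ :=
  Finset.univ.inf' ⟨⟨0, hm⟩, Finset.mem_univ _⟩ x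

/-!
Let the maximum `M` of the `xᵢ` be attained at `i₀`. Then `M - g_x(τ) = ∑ᵢ wᵢ (M - xᵢ)` with
the softmax weights `wᵢ`; the `i₀` term vanishes, and for `i ≠ i₀` keeping only
`exp(τ M) + exp(τ xᵢ)` in the normaliser bounds the term by `d / (exp(τ d) + 1)` with
`d = M - xᵢ ∈ [0, 2 Qmax]`. That function is at most `1/(τ + 2)` for `d ≤ 1` (as
`exp(τ d) ≥ 1 + τ d`) and at most `2 Qmax/(1 + exp τ)` for `d ≥ 1`.
-/

open Finset Real

theorem div_exp_mul_add_one_le_max {τ c d : ℝ} (hτ : 0 ≤ τ) (hd : 0 ≤ d) (hdc : d ≤ c) :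
    d / (exp (τ * d) + 1) ≤ max (1 / (τ + 2)) (c / (1 + exp τ)) := by
  have hpos : 0 < exp (τ * d) + 1 := by positivity
  rcases le_total d 1 with hd1 | hd1
  · refine le_max_of_le_left ?_
    rw [div_le_div_iff₀ hpos (by linarith)]
    nlinarith [add_one_le_exp (τ * d), mul_nonneg hτ hd]
  · refine le_max_of_le_right ?_
    have hexp : exp τ ≤ exp (τ * d) := exp_le_exp.2 (by nlinarith)
    rw [div_le_div_iff₀ hpos (by positivity)]
    nlinarith [exp_pos τ]

theorem sub_div_sum_eq_sum_mul_sub_div {ι : Type*} (s : Finset ι) (w x : ι → ℝ) (M : ℝ)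
    (hw : ∑ i ∈ s, w i ≠ 0) :
    M - (∑ i ∈ s, w i * x i) / ∑ i ∈ s, w i = ∑ i ∈ s, w i * (M - x i) / ∑ j ∈ s, w j := by
  rw [← sum_div, eq_div_iff hw, sub_mul, div_mul_cancel₀ _ hw, mul_sum, ← sum_sub_distrib]
  exact sum_congr rfl fun i _ => by ring

theorem exp_mul_sub_div_sum_exp_le {ι : Type*} [Fintype ι] (τ : ℝ) (x : ι → ℝ) {i j : ι}
    (hij : i ≠ j) (hle : x j ≤ x i) :
    exp (τ * x j) * (x i - x j) / ∑ k, exp (τ * x k) ≤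
      (x i - x j) / (exp (τ * (x i - x j)) + 1) :=
  calc exp (τ * x j) * (x i - x j) / ∑ k, exp (τ * x k)
      ≤ exp (τ * x j) * (x i - x j) / (exp (τ * x i) + exp (τ * x j)) :=
        div_le_div_of_nonneg_left (mul_nonneg (exp_pos _).le (sub_nonneg.2 hle))
          (by positivity)
          (add_le_sum (f := fun k => exp (τ * x k)) (fun k _ => (exp_pos _).le)
            (mem_univ i) (mem_univ j) hij)
    _ = (x i - x j) / (exp (τ * (x i - x j)) + 1) := by
        rw [mul_sub τ, exp_sub]
        field_simp

theorem sum_le_card_sub_one_mul {ι : Type*} [Fintype ι] {f : ι → ℝ} {B : ℝ} (i₀ : ι)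
    (h₀ : f i₀ = 0) (hf : ∀ i, i ≠ i₀ → f i ≤ B) :
    ∑ i, f i ≤ ((Fintype.card ι : ℝ) - 1) * B := by
  classical
  rw [← add_sum_erase _ _ (mem_univ i₀), h₀, zero_add]
  calc ∑ i ∈ univ.erase i₀, f i
      ≤ #(univ.erase i₀) • B := sum_le_card_nsmul _ _ B fun i hi => hf i (ne_of_mem_erase hi)
    _ = ((Fintype.card ι : ℝ) - 1) * B := by
        rw [card_erase_of_mem (mem_univ i₀), card_univ, nsmul_eq_mul,
          Nat.cast_sub (Fintype.card_pos_iff.2 ⟨i₀⟩)]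
        norm_num

theorem max_sub_softmax_upper_bound_general
    {m : ℕ} (hm : 1 ≤ m) (τ Qmax : ℝ) (hτ : 0 ≤ τ)
    (x : Fin m → ℝ) (hspread : maxVal hm x - minVal hm x ≤ 2 * Qmax) :
    maxVal hm x - gval x τ ≤
      ((m : ℝ) - 1) * max (1 / (τ + 2)) (2 * Qmax / (1 + Real.exp τ)) := by
  obtain ⟨i₀, -, hi₀⟩ := exists_mem_eq_sup' (univ_nonempty_iff.2 ⟨⟨0, hm⟩⟩) x
  have hle_max : ∀ i, x i ≤ x i₀ := fun i => hi₀ ▸ le_sup' x (mem_univ i)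
  have hgap_le : ∀ i, x i₀ - x i ≤ 2 * Qmax := fun i => by
    have : minVal hm x ≤ x i := inf'_le x (mem_univ i)
    rw [maxVal, hi₀] at hspread
    linarith
  have hsum : ∑ i, exp (τ * x i) ≠ 0 := (sum_pos (fun i _ => exp_pos _) ⟨i₀, mem_univ _⟩).ne'
  rw [gval, maxVal, hi₀, sub_div_sum_eq_sum_mul_sub_div _ _ _ _ hsum]
  simpa using sum_le_card_sub_one_mul i₀ (by simp) fun i hi =>
    (exp_mul_sub_div_sum_exp_le τ x hi.symm (hle_max i)).trans
      (div_exp_mul_add_one_le_max hτ (sub_nonneg.2 (hle_max i)) (hgap_le i))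

/-- Upper bound on the gap between the max and the softmax-weighted value, when the
spread of the values is bounded by `2·Qmax`:
`max_i x_i − g_x(τ) ≤ (m − 1) · max{1/(τ+2), 2·Qmax/(1 + exp τ)}`. -/
theorem max_sub_softmax_upper_bound
    {m : ℕ} (hm : 1 ≤ m) (τ Qmax : ℝ) (hτ : 0 ≤ τ) (hQmax : 0 ≤ Qmax)
    (x : Fin m → ℝ) (hspread : maxVal hm x - minVal hm x ≤ 2 * Qmax) :
    maxVal hm x - gval x τ ≤
      ((m : ℝ) - 1) * max (1 / (τ + 2)) (2 * Qmax / (1 + Real.exp τ)) :=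
  max_sub_softmax_upper_bound_general hm τ Qmax hτ x hspread
end

section
/- Let m ≥ 1, τ ≥ 0, and let x : Fin m → ℝ with δ̂ = max_{i,j} |x_i − x_j| > 0. Then max_i x_i − g_x(τ) ≥ δ̂ / (m · exp(τ · δ̂)). -/
/-- The largest distance between coordinates of `x`: `δ̂ = max_{i,j} |x_i − x_j|`. -/
noncomputable def deltaHat {m : ℕ} (hm : 1 ≤ m) (x : Fin m → ℝ) : ℝ :=
  Finset.univ.sup' ⟨(⟨0, hm⟩, ⟨0, hm⟩), Finset.mem_univ _⟩
    (fun p : Fin m × Fin m => |x p.1 - x p.2|)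

/-!
The gap `max x - g_x(τ)` is the softmax average of the nonnegative distances `max x - x_i`.
Keeping only the term of a minimal coordinate `x_b`, whose distance is `δ̂`, and bounding each of
the `m` weights `exp(τ x_i)` by `exp(τ max x)` gives `δ̂ exp(τ x_b) / (m exp(τ max x))`,
which is `δ̂ / (m exp(τ δ̂))`.
-/

open Finset Real

theorem single_div_card_mul_le_weighted_avg {ι : Type*} [Fintype ι] {w d : ι → ℝ} {W : ℝ}
    (hw : ∀ i, 0 < w i) (hd : ∀ i, 0 ≤ d i) (hwW : ∀ i, w i ≤ W) (j : ι) :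
    w j * d j / (Fintype.card ι * W) ≤ (∑ i, w i * d i) / ∑ i, w i := by
  have hterm : w j * d j ≤ ∑ i, w i * d i :=
    single_le_sum (fun i _ => mul_nonneg (hw i).le (hd i)) (mem_univ j)
  have hsum : ∑ i, w i ≤ Fintype.card ι * W := by
    simpa using sum_le_card_nsmul univ w W fun i _ => hwW i
  exact div_le_div₀ ((mul_nonneg (hw j).le (hd j)).trans hterm) hterm
    (sum_pos (fun i _ => hw i) ⟨j, mem_univ j⟩) hsum

theorem sub_gval {m : ℕ} (hm : 1 ≤ m) (x : Fin m → ℝ) (τ c : ℝ) :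
    c - gval x τ = (∑ i, exp (τ * x i) * (c - x i)) / ∑ i, exp (τ * x i) := by
  have hS : ∑ i, exp (τ * x i) ≠ 0 :=
    (sum_pos (fun i _ => exp_pos _) ⟨⟨0, hm⟩, mem_univ _⟩).ne'
  simp only [gval, mul_sub, sum_sub_distrib, ← sum_mul]
  field_simp

section

variable {m : ℕ} (hm : 1 ≤ m) (x : Fin m → ℝ)

theorem le_maxVal (i : Fin m) : x i ≤ maxVal hm x :=
  le_sup' x (mem_univ i)

theorem deltaHat_eq_maxVal_sub {b : Fin m} (hb : ∀ i, x b ≤ x i) :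
    deltaHat hm x = maxVal hm x - x b := by
  apply le_antisymm
  · refine sup'_le _ _ fun p _ => abs_sub_le_iff.2 ⟨?_, ?_⟩
    · linarith [le_maxVal hm x p.1, hb p.2]
    · linarith [le_maxVal hm x p.2, hb p.1]
  · obtain ⟨a, -, ha⟩ := exists_mem_eq_sup' ⟨⟨0, hm⟩, mem_univ _⟩ x
    calc maxVal hm x - x b = |x a - x b| := by
          rw [maxVal, ha, abs_of_nonneg (sub_nonneg.2 (hb a))]
      _ ≤ deltaHat hm x :=
          le_sup' (fun p : Fin m × Fin m => |x p.1 - x p.2|) (mem_univ (a, b))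

end

theorem max_sub_softmax_lower_bound_general
    {m : ℕ} (hm : 1 ≤ m) (τ : ℝ) (hτ : 0 ≤ τ) (x : Fin m → ℝ) :
    maxVal hm x - gval x τ ≥
      deltaHat hm x / ((m : ℝ) * Real.exp (τ * deltaHat hm x)) := by
  obtain ⟨b, -, hb⟩ := univ.exists_min_image x ⟨⟨0, hm⟩, mem_univ _⟩
  rw [deltaHat_eq_maxVal_sub hm x fun i => hb i (mem_univ i), sub_gval hm, ge_iff_le]
  set M := maxVal hm x
  calc (M - x b) / (m * exp (τ * (M - x b)))
      = exp (τ * x b) * (M - x b) / (m * exp (τ * M)) := by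
        rw [mul_sub, exp_sub]
        field_simp
    _ ≤ _ := by
        simpa using single_div_card_mul_le_weighted_avg (fun i => exp_pos (τ * x i))
          (fun i => sub_nonneg.2 (le_maxVal hm x i))
          (fun i => exp_le_exp.2 (mul_le_mul_of_nonneg_left (le_maxVal hm x i) hτ)) b

/-- Lower bound on the gap between the max and the softmax-weighted value:
if `δ̂ = max_{i,j} |x_i − x_j| > 0`, then
`max_i x_i − g_x(τ) ≥ δ̂ / (m · exp(τ·δ̂))`. -/
theorem max_sub_softmax_lower_bound
    {m : ℕ} (hm : 1 ≤ m) (τ : ℝ) (hτ : 0 ≤ τ) (x : Fin m → ℝ)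
    (hpos : 0 < deltaHat hm x) :
    maxVal hm x - gval x τ ≥
      deltaHat hm x / ((m : ℝ) * Real.exp (τ * deltaHat hm x)) :=
  max_sub_softmax_lower_bound_general hm τ hτ x
end

section
/- Let (Ω, F, μ) be a probability space, m ≥ 1, and let ε : Ω → (Fin m → ℝ) be a random vector such that each coordinate ω ↦ ε(ω)_a is integrable. Then the overestimation error of the softmax operator, τ ↦ E[ g_{ε(ω)}(τ) ], is monotonically nondecreasing on [0, ∞): for all 0 ≤ τ₁ ≤ τ₂, E[ g_{ε(ω)}(τ₁) ] ≤ E[ g_{ε(ω)}(τ₂) ]. -/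
/-!
Writing `exp (τ₂ x_i) = exp (τ₁ x_i) · exp ((τ₂ - τ₁) x_i)`, the inequality `g_x(τ₁) ≤ g_x(τ₂)` is
Chebyshev's sum inequality for the weights `exp (τ₁ x_i)` and the similarly ordered sequences
`x_i` and `exp ((τ₂ - τ₁) x_i)`. Since `|g_x(τ)| ≤ ‖x‖`, both expectations are finite and the
pointwise inequality integrates.
-/

open MeasureTheory

theorem Monovary.sum_mul_sum_le_sum_mul_sum_of_nonneg {ι R : Type*} [CommRing R] [LinearOrder R]
    [IsStrictOrderedRing R] {f g w : ι → R} (hfg : Monovary f g) (s : Finset ι)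
    (hw : ∀ i ∈ s, 0 ≤ w i) :
    (∑ i ∈ s, w i * f i) * (∑ i ∈ s, w i * g i) ≤ (∑ i ∈ s, w i) * ∑ i ∈ s, w i * (f i * g i) := by
  have hpair : ∀ i j, 0 ≤ (f i - f j) * (g i - g j) := fun i j => by
    rcases lt_trichotomy (g i) (g j) with h | h | h
    · exact mul_nonneg_of_nonpos_of_nonpos (sub_nonpos.2 (hfg h)) (sub_neg.2 h).le
    · simp [h]
    · exact mul_nonneg (sub_nonneg.2 (hfg h)) (sub_pos.2 h).le
  have hdouble : 2 * ((∑ i ∈ s, w i) * ∑ i ∈ s, w i * (f i * g i) -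
        (∑ i ∈ s, w i * f i) * (∑ i ∈ s, w i * g i)) =
      ∑ i ∈ s, ∑ j ∈ s, w i * w j * ((f i - f j) * (g i - g j)) := by
    have hterm : ∀ i j, w i * w j * ((f i - f j) * (g i - g j)) =
        w i * (w j * (f j * g j)) + w i * (f i * g i) * w j - w i * f i * (w j * g j) -
          w i * g i * (w j * f j) := fun i j => by ring
    simp only [hterm, Finset.sum_add_distrib, Finset.sum_sub_distrib, ← Finset.sum_mul_sum]
    ring
  have hdouble_nonneg : 0 ≤ ∑ i ∈ s, ∑ j ∈ s, w i * w j * ((f i - f j) * (g i - g j)) :=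
    Finset.sum_nonneg fun i hi => Finset.sum_nonneg fun j hj =>
      mul_nonneg (mul_nonneg (hw i hi) (hw j hj)) (hpair i j)
  linarith

theorem gval_monotone {m : ℕ} (x : Fin m → ℝ) : Monotone (gval x) := by
  intro τ₁ τ₂ hτ
  cases isEmpty_or_nonempty (Fin m)
  · simp [gval]
  set w := fun i => Real.exp (τ₁ * x i)
  set f := fun i => Real.exp ((τ₂ - τ₁) * x i)
  have hsplit : ∀ i, Real.exp (τ₂ * x i) = w i * f i := fun i => by
    simp only [w, f, ← Real.exp_add]
    ring_nf
  have hfx : Monovary f x :=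
    (monovary_self x).comp_monotone_left fun a b hab =>
      Real.exp_le_exp.2 (mul_le_mul_of_nonneg_left hab (sub_nonneg.2 hτ))
  have hw : ∀ i, 0 < w i := fun i => Real.exp_pos _
  have hwf : ∀ i, 0 < w i * f i := fun i => mul_pos (hw i) (Real.exp_pos _)
  have hgval₂ : gval x τ₂ = (∑ i, w i * (f i * x i)) / ∑ i, w i * f i := by
    simp only [gval, hsplit, mul_assoc]
  rw [hgval₂, gval, div_le_div_iff₀ (Finset.sum_pos (fun i _ => hw i) Finset.univ_nonempty)
    (Finset.sum_pos (fun i _ => hwf i) Finset.univ_nonempty)]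
  linear_combination hfx.sum_mul_sum_le_sum_mul_sum_of_nonneg Finset.univ fun i _ => (hw i).le

theorem abs_gval_le_norm {m : ℕ} (x : Fin m → ℝ) (τ : ℝ) : |gval x τ| ≤ ‖x‖ := by
  rw [gval, abs_div, abs_of_nonneg (Finset.sum_nonneg fun i _ => (Real.exp_pos _).le)]
  refine div_le_of_le_mul₀ (Finset.sum_nonneg fun i _ => (Real.exp_pos _).le) (norm_nonneg x) ?_
  calc |∑ i, Real.exp (τ * x i) * x i|
      ≤ ∑ i, Real.exp (τ * x i) * ‖x‖ := by
        refine (Finset.abs_sum_le_sum_abs _ _).trans (Finset.sum_le_sum fun i _ => ?_)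
        rw [abs_mul, Real.abs_exp]
        exact mul_le_mul_of_nonneg_left (norm_le_pi_norm x i) (Real.exp_pos _).le
    _ = ‖x‖ * ∑ i, Real.exp (τ * x i) := by rw [← Finset.sum_mul, mul_comm]

theorem measurable_gval {m : ℕ} (τ : ℝ) : Measurable fun x : Fin m → ℝ => gval x τ := by
  unfold gval
  fun_prop

theorem integrable_gval {Ω : Type*} [MeasurableSpace Ω] {μ : Measure Ω} {m : ℕ}
    {ε : Ω → Fin m → ℝ} (hε : Integrable ε μ) (τ : ℝ) :
    Integrable (fun ω => gval (ε ω) τ) μ :=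
  hε.norm.mono' ((measurable_gval τ).comp_aemeasurable hε.aemeasurable).aestronglyMeasurable
    (ae_of_all _ fun ω => abs_gval_le_norm (ε ω) τ)

theorem expected_softmax_overestimation_monotone_general
    {Ω : Type*} [MeasurableSpace Ω] (μ : Measure Ω)
    {m : ℕ} (ε : Ω → Fin m → ℝ)
    (hint : ∀ a, Integrable (fun ω => ε ω a) μ)
    (τ₁ τ₂ : ℝ) (h12 : τ₁ ≤ τ₂) :
    (∫ ω, gval (ε ω) τ₁ ∂μ) ≤ (∫ ω, gval (ε ω) τ₂ ∂μ) := by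
  have hε : Integrable ε μ := integrable_pi_iff.2 hint
  exact integral_mono (integrable_gval hε τ₁) (integrable_gval hε τ₂)
    fun ω => gval_monotone (ε ω) h12

/-- Theorem 2, part (III): the softmax overestimation error `τ ↦ E[g_ε(τ)]` is
monotonically nondecreasing on `[0, ∞)`. -/
theorem expected_softmax_overestimation_monotone
    {Ω : Type*} [MeasurableSpace Ω] (μ : Measure Ω) [IsProbabilityMeasure μ]
    {m : ℕ} (hm : 1 ≤ m) (ε : Ω → Fin m → ℝ)
    (hint : ∀ a, Integrable (fun ω => ε ω a) μ)
    (τ₁ τ₂ : ℝ) (h1 : 0 ≤ τ₁) (h12 : τ₁ ≤ τ₂) :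
    (∫ ω, gval (ε ω) τ₁ ∂μ) ≤ (∫ ω, gval (ε ω) τ₂ ∂μ) :=
  expected_softmax_overestimation_monotone_general μ ε hint τ₁ τ₂ h12
end

section
/- Let m ≥ 1 and let x : Fin m → ℝ be nonconstant (there exist i, j with x_i ≠ x_j). Then for every τ > 0, (1/m)·∑_i x_i < g_x(τ) < max_i x_i; i.e., for a nonconstant value vector the softmax-weighted value at positive inverse temperature lies strictly between the mean and the max. -/
lemma double_sum_identity {m : ℕ} (w x : Fin m → ℝ) :
    ∑ p : Fin m × Fin m, (w p.1 - w p.2) * (x p.1 - x p.2)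
      = 2 * ((m : ℝ) * ∑ i, w i * x i) - 2 * ((∑ i, w i) * (∑ i, x i)) := by
  rw [Fintype.sum_prod_type]
  have : ∀ i : Fin m, ∑ j, (w i - w j) * (x i - x j)
      = (m : ℝ) * (w i * x i) - w i * (∑ j, x j) - (∑ j, w j) * x i
        + ∑ j, w j * x j := by
    intro i
    have : ∀ j, (w i - w j) * (x i - x j)
        = w i * x i - w i * x j - w j * x i + w j * x j := by intro j; ring
    simp only [this, Finset.sum_add_distrib, Finset.sum_sub_distrib,
      Finset.sum_const, Finset.card_univ, Fintype.card_fin, nsmul_eq_mul,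
      ← Finset.mul_sum, ← Finset.sum_mul]
  simp only [this, Finset.sum_add_distrib, Finset.sum_sub_distrib,
    Finset.sum_const, Finset.card_univ, Fintype.card_fin, nsmul_eq_mul,
    ← Finset.mul_sum, ← Finset.sum_mul]
  ring

/-- For a nonconstant value vector, the softmax-weighted value at positive inverse
temperature lies strictly between the mean and the max:
`(1/m)·∑ i, x_i < g_x(τ) < max_i x_i`. -/
theorem mean_lt_gval_lt_max
    {m : ℕ} (hm : 1 ≤ m) (x : Fin m → ℝ)
    (hnc : ∃ i j, x i ≠ x j) (τ : ℝ) (hτ : 0 < τ) :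
    (1 / (m : ℝ)) * ∑ i, x i < gval x τ ∧ gval x τ < maxVal hm x := by
  obtain ⟨i0, j0, hij⟩ := hnc
  set w : Fin m → ℝ := fun i => Real.exp (τ * x i) with hw
  have hwpos : ∀ i, 0 < w i := fun i => Real.exp_pos _
  have hm' : (0 : ℝ) < m := by exact_mod_cast hm
  have hS : 0 < ∑ i, w i :=
    Finset.sum_pos (fun i _ => hwpos i) ⟨⟨0, hm⟩, Finset.mem_univ _⟩
  have hmono : ∀ i j : Fin m, x i < x j → w i < w j := fun i j h =>
    Real.exp_lt_exp.2 (mul_lt_mul_of_pos_left h hτ)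
  have hnn : ∀ p : Fin m × Fin m, 0 ≤ (w p.1 - w p.2) * (x p.1 - x p.2) := by
    rintro ⟨i, j⟩
    rcases lt_trichotomy (x i) (x j) with h | h | h
    · have h1 : w i - w j ≤ 0 := by linarith [hmono i j h]
      have h2 : x i - x j ≤ 0 := by linarith
      nlinarith
    · simp [h]
    · exact mul_nonneg (by linarith [hmono j i h]) (by linarith)
  have hstrict : 0 < (w i0 - w j0) * (x i0 - x j0) := by
    rcases lt_or_gt_of_ne hij with h | h
    · exact mul_pos_of_neg_of_neg (by linarith [hmono i0 j0 h]) (by linarith)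
    · exact mul_pos (by linarith [hmono j0 i0 h]) (by linarith)
  have hT : 0 < ∑ p : Fin m × Fin m, (w p.1 - w p.2) * (x p.1 - x p.2) :=
    Finset.sum_pos' (fun p _ => hnn p) ⟨(i0, j0), Finset.mem_univ _, hstrict⟩
  rw [double_sum_identity] at hT
  have hkey : (∑ i, w i) * (∑ i, x i) < (m : ℝ) * ∑ i, w i * x i := by linarith
  constructor
  · rw [gval, lt_div_iff₀ hS]
    have heq : (1 / (m : ℝ)) * (∑ i, x i) * (∑ i, Real.exp (τ * x i))
        = ((∑ i, w i) * (∑ i, x i)) / m := by rw [hw]; ring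
    rw [heq, div_lt_iff₀ hm']
    calc (∑ i, w i) * (∑ i, x i) < (m : ℝ) * ∑ i, w i * x i := hkey
      _ = (∑ i, Real.exp (τ * x i) * x i) * m := by rw [hw]; ring
  · set M := maxVal hm x with hM
    have hle : ∀ k, x k ≤ M := fun k => Finset.le_sup' x (Finset.mem_univ k)
    have hex : ∃ k, x k < M := by
      by_cases h : x i0 < M
      · exact ⟨i0, h⟩
      · have hMi : x i0 = M := le_antisymm (hle i0) (not_lt.1 h)
        exact ⟨j0, lt_of_le_of_ne (hle j0) (fun hc => hij (by rw [hMi, hc]))⟩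
    obtain ⟨k, hk⟩ := hex
    rw [gval, div_lt_iff₀ hS]
    calc (∑ i, Real.exp (τ * x i) * x i) < ∑ i, Real.exp (τ * x i) * M := by
          refine Finset.sum_lt_sum (fun i _ => ?_) ⟨k, Finset.mem_univ _, ?_⟩
          · exact mul_le_mul_of_nonneg_left (hle i) (Real.exp_pos _).le
          · exact mul_lt_mul_of_pos_left hk (Real.exp_pos _)
      _ = M * ∑ i, Real.exp (τ * x i) := by rw [← Finset.sum_mul]; ring
end

section
/- Let m ≥ 1 and let x : Fin m → ℝ be nonconstant (there exist i, j with x_i ≠ x_j). Then for every τ > 0 there exists ω > 0 such that the mellowmax value equals the softmax-weighted value: log( (1/m)·∑_i exp(ω·x_i) ) / ω = g_x(τ). -/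
/-- The mellowmax value `mm_ω(x) = log((1/m)·∑ i, exp(ω·x_i)) / ω`. -/
noncomputable def mellowmax {m : ℕ} (x : Fin m → ℝ) (ω : ℝ) : ℝ :=
  Real.log ((1 / (m : ℝ)) * ∑ i, Real.exp (ω * x i)) / ω

/-!
As `ω` runs over `(0, ∞)`, `mellowmax x ω` moves continuously from the mean of `x` (limit at
`0⁺`: it is the difference quotient at `0` of `ω ↦ log (mean of exp (ω • x))`, whose derivative
there is the mean) to `max x` (limit at `∞`: it is squeezed between `max x - log m / ω` and
`max x`). The softmax-weighted value `gval x τ` lies strictly in between: below the max since it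
is a weighted average with positive weights, above the mean by the strict Chebyshev sum
inequality, as the weights `exp (τ x i)` are ordered like `x`. The intermediate value theorem
concludes.
-/

open Finset Real Filter Topology

theorem sum_mul_sum_lt_card_mul_sum_of_strictMono {ι : Type*} [Fintype ι] {φ : ℝ → ℝ}
    (hφ : StrictMono φ) {x : ι → ℝ} (hx : ∃ i j, x i ≠ x j) :
    (∑ i, φ (x i)) * ∑ i, x i < Fintype.card ι * ∑ i, φ (x i) * x i := by
  have hterm : ∀ i j, 0 ≤ (φ (x i) - φ (x j)) * (x i - x j) := fun i j =>
    (le_total (x i) (x j)).elim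
      (fun h => mul_nonneg_of_nonpos_of_nonpos (sub_nonpos.2 (hφ.monotone h)) (sub_nonpos.2 h))
      (fun h => mul_nonneg (sub_nonneg.2 (hφ.monotone h)) (sub_nonneg.2 h))
  obtain ⟨i₀, j₀, hij⟩ := hx
  have hpos : 0 < (φ (x i₀) - φ (x j₀)) * (x i₀ - x j₀) := hij.lt_or_gt.elim
      (fun h => mul_pos_of_neg_of_neg (sub_neg.2 (hφ h)) (sub_neg.2 h))
      (fun h => mul_pos (sub_pos.2 (hφ h)) (sub_pos.2 h))
  have hdouble : 0 < ∑ i, ∑ j, (φ (x i) - φ (x j)) * (x i - x j) :=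
    sum_pos' (fun i _ => sum_nonneg fun j _ => hterm i j)
      ⟨i₀, mem_univ _, sum_pos' (fun j _ => hterm i₀ j) ⟨j₀, mem_univ _, hpos⟩⟩
  have hexpand : ∑ i, ∑ j, (φ (x i) - φ (x j)) * (x i - x j)
      = 2 * (Fintype.card ι * ∑ i, φ (x i) * x i - (∑ i, φ (x i)) * ∑ i, x i) := by
    simp only [sub_mul, mul_sub, sum_sub_distrib, sum_const, card_univ, nsmul_eq_mul,
      ← sum_mul, ← mul_sum]
    ring
  linarith

theorem mean_lt_gval {m : ℕ} {x : Fin m → ℝ} (hx : ∃ i j, x i ≠ x j) {τ : ℝ} (hτ : 0 < τ) :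
    (∑ i, x i) / m < gval x τ := by
  have : Nonempty (Fin m) := let ⟨i, _⟩ := hx; ⟨i⟩
  have hm : (0 : ℝ) < m := by exact_mod_cast Fin.pos_iff_nonempty.2 this
  have hsum : 0 < ∑ i, exp (τ * x i) := sum_pos (fun _ _ => exp_pos _) univ_nonempty
  rw [gval, div_lt_div_iff₀ hm hsum, mul_comm (∑ i, x i), mul_comm _ (m : ℝ)]
  simpa using sum_mul_sum_lt_card_mul_sum_of_strictMono
    (exp_strictMono.comp (strictMono_mul_left_of_pos hτ)) hx

theorem gval_lt_of_forall_le {m : ℕ} {x : Fin m → ℝ} {M : ℝ} (hM : ∀ i, x i ≤ M)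
    (hlt : ∃ i, x i < M) (τ : ℝ) : gval x τ < M := by
  obtain ⟨i, hi⟩ := hlt
  rw [gval, div_lt_iff₀ (sum_pos (fun _ _ => exp_pos _) ⟨i, mem_univ _⟩), mul_comm, sum_mul]
  exact sum_lt_sum (fun j _ => mul_le_mul_of_nonneg_left (hM j) (exp_pos _).le)
    ⟨i, mem_univ _, mul_lt_mul_of_pos_left hi (exp_pos _)⟩

theorem mean_exp_pos {m : ℕ} (hm : 0 < m) (x : Fin m → ℝ) (ω : ℝ) :
    0 < (1 / (m : ℝ)) * ∑ i, exp (ω * x i) := by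
  have : Nonempty (Fin m) := Fin.pos_iff_nonempty.1 hm
  have := sum_pos (fun i _ => exp_pos (ω * x i)) univ_nonempty
  positivity

theorem mellowmax_le_of_forall_le {m : ℕ} {x : Fin m → ℝ} {k : Fin m} (hk : ∀ i, x i ≤ x k)
    {ω : ℝ} (hω : 0 < ω) : mellowmax x ω ≤ x k := by
  rw [mellowmax, div_le_iff₀ hω, log_le_iff_le_exp (mean_exp_pos k.pos x ω)]
  have hm : (m : ℝ) ≠ 0 := Nat.cast_ne_zero.2 k.pos.ne'
  calc (1 / (m : ℝ)) * ∑ i, exp (ω * x i) ≤ (1 / (m : ℝ)) * ∑ _i : Fin m, exp (ω * x k) := by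
        gcongr with i; exact hk i
    _ = exp (x k * ω) := by simp [hm, mul_comm]

theorem sub_log_div_le_mellowmax {m : ℕ} (x : Fin m → ℝ) (k : Fin m) {ω : ℝ} (hω : 0 < ω) :
    x k - log m / ω ≤ mellowmax x ω := by
  rw [mellowmax, le_div_iff₀ hω, sub_mul, div_mul_cancel₀ _ hω.ne',
    le_log_iff_exp_le (mean_exp_pos k.pos x ω), exp_sub, exp_log (Nat.cast_pos.2 k.pos),
    div_eq_inv_mul, one_div, mul_comm (x k)]
  gcongr
  exact single_le_sum (f := fun i => exp (ω * x i)) (fun i _ => (exp_pos _).le) (mem_univ k)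

theorem tendsto_mellowmax_atTop {m : ℕ} {x : Fin m → ℝ} {k : Fin m} (hk : ∀ i, x i ≤ x k) :
    Tendsto (mellowmax x) atTop (𝓝 (x k)) := by
  have hlower : Tendsto (fun ω : ℝ => x k - log m / ω) atTop (𝓝 (x k)) := by
    simpa using tendsto_const_nhds.sub
      ((tendsto_const_nhds (x := log m)).div_atTop tendsto_id)
  refine tendsto_of_tendsto_of_tendsto_of_le_of_le' hlower tendsto_const_nhds ?_ ?_
  · filter_upwards [eventually_gt_atTop 0] with ω hω using sub_log_div_le_mellowmax x k hω
  · filter_upwards [eventually_gt_atTop 0] with ω hω using mellowmax_le_of_forall_le hk hω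

theorem mellowmax_eq_slope {m : ℕ} (x : Fin m → ℝ) :
    mellowmax x = slope (fun ω => log ((1 / (m : ℝ)) * ∑ i, exp (ω * x i))) 0 := by
  funext ω
  rcases eq_or_ne (m : ℝ) 0 with hm | hm <;> simp [mellowmax, slope_def_field, hm]

theorem hasDerivAt_log_mean_exp_zero {m : ℕ} (hm : 0 < m) (x : Fin m → ℝ) :
    HasDerivAt (fun ω => log ((1 / (m : ℝ)) * ∑ i, exp (ω * x i))) ((∑ i, x i) / m) 0 := by
  have hsum : HasDerivAt (fun ω => ∑ i, exp (ω * x i)) (∑ i, exp (0 * x i) * x i) 0 :=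
    HasDerivAt.fun_sum fun i _ => (hasDerivAt_mul_const (x i)).exp
  convert (hsum.const_mul (1 / (m : ℝ))).log (mean_exp_pos hm x 0).ne' using 1
  have : (m : ℝ) ≠ 0 := Nat.cast_ne_zero.2 hm.ne'
  simp only [one_div, zero_mul, exp_zero, one_mul, sum_const, card_univ, Fintype.card_fin,
    nsmul_eq_mul, mul_one]
  field_simp

theorem tendsto_mellowmax_nhdsGT_zero {m : ℕ} (hm : 0 < m) (x : Fin m → ℝ) :
    Tendsto (mellowmax x) (𝓝[>] 0) (𝓝 ((∑ i, x i) / m)) := by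
  rw [mellowmax_eq_slope]
  exact (hasDerivAt_iff_tendsto_slope.1 (hasDerivAt_log_mean_exp_zero hm x)).mono_left
    (nhdsGT_le_nhdsNE 0)

theorem continuousOn_mellowmax {m : ℕ} (hm : 0 < m) (x : Fin m → ℝ) :
    ContinuousOn (mellowmax x) (Set.Ioi 0) := by
  refine ContinuousOn.div (Continuous.continuousOn ?_) continuousOn_id fun ω hω => ne_of_gt hω
  exact Continuous.log (by fun_prop) fun ω => (mean_exp_pos hm x ω).ne'

/-- For a nonconstant value vector and any `τ > 0`, there is an `ω > 0` at which
the mellowmax value equals the softmax-weighted value. -/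
theorem exists_mellowmax_eq_gval
    {m : ℕ} (hm : 1 ≤ m) (x : Fin m → ℝ)
    (hnc : ∃ i j, x i ≠ x j) (τ : ℝ) (hτ : 0 < τ) :
    ∃ ω > (0 : ℝ), mellowmax x ω = gval x τ := by
  have : Nonempty (Fin m) := Fin.pos_iff_nonempty.1 hm
  obtain ⟨k, hk⟩ := Finite.exists_max x
  have hlt : ∃ i, x i < x k := by
    obtain ⟨i, j, hij⟩ := hnc
    by_contra! h
    exact hij (((hk i).antisymm (h i)).trans ((hk j).antisymm (h j)).symm)
  obtain ⟨ω, hω, h⟩ := isPreconnected_Ioi.intermediate_value_Ioo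
    (le_principal_iff.2 self_mem_nhdsWithin) (le_principal_iff.2 (Ioi_mem_atTop 0))
    (continuousOn_mellowmax hm x) (tendsto_mellowmax_nhdsGT_zero hm x)
    (tendsto_mellowmax_atTop hk) ⟨mean_lt_gval hnc hτ, gval_lt_of_forall_le hk hlt τ⟩
  exact ⟨ω, hω, h⟩
end
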